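/- Let C : ℝⁿ → ℝ be a quadratic polynomial with gradient J ≠ 0 at z and Hessian H. If ‖J‖⁴ ≥ 2·|C(z)|·|J H Jᵀ|, then the geometric error satisfies ‖ε^G‖ ≤ 2‖ε^S‖ = 2|C(z)|/‖J‖, where ε^G is a minimum-norm solution of C(z+ε)=0 and ε^S the minimum-norm solution of the linearized constraint. -/

import Mathlib

/-! Along the line `z + t J` the constraint is the scalar quadratic
`C z + ‖J‖² t + (J H Jᵀ / 2) t²`. The hypothesis `‖J‖⁴ ≥ 2 |C z| |J H Jᵀ|` makes it take opposite
signs at `t = 0` and `t = -2 C z / ‖J‖²`, so it has a root `t` with `|t| ≤ 2 |C z| / ‖J‖²`, and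
`t J` is a solution of norm at most `2 |C z| / ‖J‖ = 2 ‖ε^S‖`. -/

open Matrix

/-- The Euclidean norm of a vector in `ℝⁿ`. -/
noncomputable def euclNorm {n : ℕ} (v : Fin n → ℝ) : ℝ :=
  Real.sqrt (∑ i, v i ^ 2)

section EuclNorm

variable {n : ℕ}

lemma euclNorm_eq_norm_toLp (v : Fin n → ℝ) :
    euclNorm v = ‖(WithLp.toLp 2 v : EuclideanSpace ℝ (Fin n))‖ := by
  simp [euclNorm, EuclideanSpace.norm_eq]

lemma dotProduct_eq_inner_toLp (v w : Fin n → ℝ) :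
    v ⬝ᵥ w = inner ℝ (WithLp.toLp 2 v : EuclideanSpace ℝ (Fin n)) (WithLp.toLp 2 w) := by
  simp [EuclideanSpace.inner_eq_star_dotProduct, dotProduct_comm]

lemma euclNorm_pos {v : Fin n → ℝ} (hv : v ≠ 0) : 0 < euclNorm v := by
  simpa [euclNorm_eq_norm_toLp] using hv

lemma euclNorm_smul (a : ℝ) (v : Fin n → ℝ) : euclNorm (a • v) = |a| * euclNorm v := by
  simp [euclNorm_eq_norm_toLp, WithLp.toLp_smul, norm_smul]

lemma dotProduct_self_eq_euclNorm_sq (v : Fin n → ℝ) : v ⬝ᵥ v = euclNorm v ^ 2 := by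
  rw [dotProduct_eq_inner_toLp, euclNorm_eq_norm_toLp, real_inner_self_eq_norm_sq]

lemma abs_dotProduct_le_euclNorm_mul (v w : Fin n → ℝ) :
    |v ⬝ᵥ w| ≤ euclNorm v * euclNorm w := by
  simpa only [dotProduct_eq_inner_toLp, euclNorm_eq_norm_toLp] using abs_real_inner_le_norm _ _

lemma euclNorm_eq_of_isMinNorm_linear {c : ℝ} {J ε₀ : Fin n → ℝ} (hJ : J ≠ 0)
    (h₀ : c + J ⬝ᵥ ε₀ = 0) (hmin : ∀ ε, c + J ⬝ᵥ ε = 0 → euclNorm ε₀ ≤ euclNorm ε) :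
    euclNorm ε₀ = |c| / euclNorm J := by
  have hJpos := euclNorm_pos hJ
  apply le_antisymm
  · have hsol : c + J ⬝ᵥ ((-c / euclNorm J ^ 2) • J) = 0 := by
      rw [dotProduct_smul, smul_eq_mul, dotProduct_self_eq_euclNorm_sq]
      field_simp
      ring
    calc euclNorm ε₀ ≤ euclNorm ((-c / euclNorm J ^ 2) • J) := hmin _ hsol
      _ = |c| / euclNorm J := by
        rw [euclNorm_smul, abs_div, abs_neg, abs_pow, abs_of_pos hJpos]
        field_simp
  · rw [div_le_iff₀ hJpos, mul_comm]
    simpa [show J ⬝ᵥ ε₀ = -c by linarith] using abs_dotProduct_le_euclNorm_mul J ε₀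

end EuclNorm

lemma exists_root_quadratic_of_two_mul_abs_le {a b c : ℝ} (hb : 0 < b)
    (h : 2 * |c| * |a| ≤ b ^ 2) :
    ∃ t, |t| ≤ 2 * |c| / b ∧ c + b * t + a / 2 * t ^ 2 = 0 := by
  set f : ℝ → ℝ := fun t => c + b * t + a / 2 * t ^ 2
  set t₀ := -2 * c / b
  have hf₀ : f 0 = c := by simp [f]
  have hft₀ : f t₀ = -c + 2 * a * c ^ 2 / b ^ 2 := by
    simp only [f, t₀]
    field_simp
    ring
  have hsign : f 0 * f t₀ ≤ 0 := by
    have hac : 2 * c * a ≤ b ^ 2 := by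
      calc 2 * c * a ≤ |2 * c * a| := le_abs_self _
        _ = 2 * |c| * |a| := by rw [abs_mul, abs_mul, abs_two]
        _ ≤ b ^ 2 := h
    have : f 0 * f t₀ = c ^ 2 * (2 * c * a - b ^ 2) / b ^ 2 := by
      rw [hf₀, hft₀]
      field_simp
      ring
    rw [this]
    exact div_nonpos_of_nonpos_of_nonneg
      (mul_nonpos_of_nonneg_of_nonpos (sq_nonneg c) (by linarith)) (sq_nonneg b)
  have hzero : (0 : ℝ) ∈ Set.uIcc (f 0) (f t₀) := by
    rcases mul_nonpos_iff.mp hsign with ⟨h1, h2⟩ | ⟨h1, h2⟩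
    · exact Set.mem_uIcc.mpr (Or.inr ⟨h2, h1⟩)
    · exact Set.mem_uIcc.mpr (Or.inl ⟨h1, h2⟩)
  obtain ⟨t, ht, hroot⟩ :=
    intermediate_value_uIcc (by fun_prop : Continuous f).continuousOn hzero
  refine ⟨t, ?_, hroot⟩
  calc |t| ≤ |t₀| := by simpa using Set.abs_sub_left_of_mem_uIcc ht
    _ = 2 * |c| / b := by simp [t₀, abs_div, abs_mul, abs_of_pos hb]

theorem stmt4_general {n : ℕ} (C : (Fin n → ℝ) → ℝ) (z J : Fin n → ℝ)
    (H : Matrix (Fin n) (Fin n) ℝ)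
    (hTaylor : ∀ ε, C (z + ε) = C z + J ⬝ᵥ ε + (1 / 2) * (ε ⬝ᵥ H.mulVec ε))
    (hJ0 : J ≠ 0)
    (hcond : euclNorm J ^ 4 ≥ 2 * |C z| * |J ⬝ᵥ H.mulVec J|)
    (εG : Fin n → ℝ)
    (hGmin : ∀ ε, C (z + ε) = 0 → euclNorm εG ≤ euclNorm ε)
    (εS : Fin n → ℝ) (hS : C z + J ⬝ᵥ εS = 0)
    (hSmin : ∀ ε, C z + J ⬝ᵥ ε = 0 → euclNorm εS ≤ euclNorm ε) :
    euclNorm εG ≤ 2 * euclNorm εS ∧ euclNorm εS = |C z| / euclNorm J := by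
  have hεS := euclNorm_eq_of_isMinNorm_linear hJ0 hS hSmin
  have hJpos := euclNorm_pos hJ0
  obtain ⟨t, ht, hroot⟩ := exists_root_quadratic_of_two_mul_abs_le (c := C z)
    (a := J ⬝ᵥ H.mulVec J) (by positivity : 0 < euclNorm J ^ 2) (by rw [← pow_mul]; exact hcond)
  have hline : C (z + t • J) = 0 := by
    rw [hTaylor, ← hroot, dotProduct_smul, mulVec_smul, dotProduct_smul, smul_dotProduct,
      dotProduct_self_eq_euclNorm_sq]
    simp only [smul_eq_mul]
    ring
  refine ⟨?_, hεS⟩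
  calc euclNorm εG ≤ |t| * euclNorm J := by simpa [euclNorm_smul] using hGmin _ hline
    _ ≤ 2 * |C z| / euclNorm J ^ 2 * euclNorm J := by gcongr
    _ = 2 * euclNorm εS := by rw [hεS]; field_simp

/-- For a quadratic constraint `C` with gradient `J ≠ 0` at `z` and Hessian `H`:
if `‖J‖⁴ ≥ 2 |C z| |J H Jᵀ|`, then the geometric error satisfies
`‖ε^G‖ ≤ 2 ‖ε^S‖ = 2 |C z| / ‖J‖`, where `ε^G` is a minimum-norm solution of
`C (z + ε) = 0` and `ε^S` the minimum-norm solution of the linearized constraint. -/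
theorem stmt4 {n : ℕ} (C : (Fin n → ℝ) → ℝ) (z J : Fin n → ℝ)
    (H : Matrix (Fin n) (Fin n) ℝ) (hH : H.IsSymm)
    (hTaylor : ∀ ε, C (z + ε) = C z + J ⬝ᵥ ε + (1 / 2) * (ε ⬝ᵥ H.mulVec ε))
    (hJ0 : J ≠ 0)
    (hcond : euclNorm J ^ 4 ≥ 2 * |C z| * |J ⬝ᵥ H.mulVec J|)
    (εG : Fin n → ℝ) (hG : C (z + εG) = 0)
    (hGmin : ∀ ε, C (z + ε) = 0 → euclNorm εG ≤ euclNorm ε)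
    (εS : Fin n → ℝ) (hS : C z + J ⬝ᵥ εS = 0)
    (hSmin : ∀ ε, C z + J ⬝ᵥ ε = 0 → euclNorm εS ≤ euclNorm ε) :
    euclNorm εG ≤ 2 * euclNorm εS ∧ euclNorm εS = |C z| / euclNorm J :=
  stmt4_general C z J H hTaylor hJ0 hcond εG hGmin εS hS hSmin
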